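/- arXiv:2107.01340 — 9 statements merged into one kernel-verified Lean document; each statement's English description precedes it below -/
import Mathlib

section
/- If a cutoff vector p satisfies the admissions-market equilibrium conditions (D_c(p) ≤ q_c for all schools c, and D_c(p) = q_c whenever p_c > 0), and every student prefers any school to nonassignment, then the total measure of assigned students equals min{1, Σ_c q_c}. -/
theorem market_clearing_general {C : Type*} [Fintype C]
    (D q p : C → ℝ)
    (hp : ∀ c, p c ∈ Set.Icc (0 : ℝ) 1)
    -- total assigned mass is at most the full population
    (htot : ∑ c, D c ≤ 1)
    -- if some school has cutoff zero, every student is assigned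
    (hzero : (∃ c, p c = 0) → ∑ c, D c = 1)
    -- capacity condition
    (hcap : ∀ c, D c ≤ q c)
    -- stability condition
    (hstab : ∀ c, 0 < p c → D c = q c) :
    ∑ c, D c = min 1 (∑ c, q c) := by
  have hDq : ∑ c, D c ≤ ∑ c, q c := Finset.sum_le_sum fun c _ => hcap c
  by_cases hcut : ∃ c, p c = 0
  · have hfull : ∑ c, D c = 1 := hzero hcut
    rw [hfull, min_eq_left (hfull ▸ hDq)]
  · have hfilled : ∀ c, D c = q c := fun c =>
      hstab c ((hp c).1.lt_of_ne' fun h => hcut ⟨c, h⟩)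
    have hsum : ∑ c, D c = ∑ c, q c := Finset.sum_congr rfl fun c _ => hfilled c
    rw [hsum, min_eq_right (hsum ▸ htot)]

/-- Equilibrium cutoffs clear the market: if demand satisfies the capacity and
stability conditions, the total measure of assigned students is `min 1 (∑ q)`. -/
theorem market_clearing {C : Type*} [Fintype C] [Nonempty C]
    (D q p : C → ℝ)
    (hq : ∀ c, 0 < q c)
    (hp : ∀ c, p c ∈ Set.Icc (0 : ℝ) 1)
    (hDnonneg : ∀ c, 0 ≤ D c)
    -- total assigned mass is at most the full population
    (htot : ∑ c, D c ≤ 1)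
    -- if some school has cutoff zero, every student is assigned
    (hzero : (∃ c, p c = 0) → ∑ c, D c = 1)
    -- capacity condition
    (hcap : ∀ c, D c ≤ q c)
    -- stability condition
    (hstab : ∀ c, 0 < p c → D c = q c) :
    ∑ c, D c = min 1 (∑ c, q c) :=
  market_clearing_general D q p hp htot hzero hcap hstab
end

section
/- In the single-score MNL market with sorted cutoffs, the demand vector satisfies D = A p + γ/Γ, where A is the upper triangular matrix with A_{ii} = −γ_i / (Σ_{k=1}^{i} γ_k), A_{ij} = γ_i (1/Σ_{k=1}^{j−1} γ_k − 1/Σ_{k=1}^{j} γ_k) for i < j, and A_{ij} = 0 for i > j, and Γ = Σ_i γ_i. -/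
open Finset

/-- Cutoff of the next school, extended with `p_{n+1} = 1`. -/
noncomputable def nextCutoff {n : ℕ} (p : Fin n → ℝ) (d : Fin n) : ℝ :=
  if h : (d : ℕ) + 1 < n then p ⟨(d : ℕ) + 1, h⟩ else 1

/-- Single-score MNL demand at sorted cutoffs. -/
noncomputable def mnlDemand {n : ℕ} (γ p : Fin n → ℝ) (c : Fin n) : ℝ :=
  ∑ d ∈ Ici c, (γ c / ∑ i ∈ Iic d, γ i) * (nextCutoff p d - p d)

/-- The upper triangular demand matrix `A`. -/
noncomputable def Amat {n : ℕ} (γ : Fin n → ℝ) : Matrix (Fin n) (Fin n) ℝ :=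
  Matrix.of fun i j =>
    if i = j then -γ i / ∑ k ∈ Iic i, γ k
    else if i < j then γ i * (1 / ∑ k ∈ Iio j, γ k - 1 / ∑ k ∈ Iic j, γ k)
    else 0

namespace Fin

lemma Iic_castSucc {m : ℕ} (d : Fin m) : Iic d.castSucc = Iio d.succ := by
  ext i
  simp only [mem_Iic, mem_Iio, le_castSucc_iff]

end Fin

lemma nextCutoff_castSucc {m : ℕ} (p : Fin (m + 1) → ℝ) (d : Fin m) :
    nextCutoff p d.castSucc = p d.succ := by
  simp [nextCutoff, Fin.succ]

lemma nextCutoff_last {m : ℕ} (p : Fin (m + 1) → ℝ) : nextCutoff p (Fin.last m) = 1 := by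
  simp [nextCutoff]

/-- Summation by parts against `nextCutoff`: shifting the index turns the initial segment `Iic d`
into `Iio (d + 1)`, and the last school contributes its weight times `p_{n+1} = 1`. -/
lemma sum_Ici_mul_nextCutoff {m : ℕ} (f : Finset (Fin (m + 1)) → ℝ) (p : Fin (m + 1) → ℝ)
    (c : Fin (m + 1)) :
    ∑ d ∈ Ici c, f (Iic d) * nextCutoff p d = f univ + ∑ e ∈ Ioi c, f (Iio e) * p e := by
  rw [← filter_le_eq_Ici, ← filter_lt_eq_Ioi, sum_filter, sum_filter, Fin.sum_univ_castSucc,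
    Fin.sum_univ_succ, if_pos (Fin.le_last c), if_neg (Fin.not_lt_zero c), nextCutoff_last,
    ← Fin.top_eq_last, Iic_top, mul_one, zero_add, add_comm]
  simp only [Fin.le_castSucc_iff, Fin.Iic_castSucc, nextCutoff_castSucc]

lemma Amat_mulVec_apply {n : ℕ} (γ p : Fin n → ℝ) (c : Fin n) :
    (Amat γ).mulVec p c = -(γ c / ∑ k ∈ Iic c, γ k) * p c
      + ∑ j ∈ Ioi c, (γ c / ∑ k ∈ Iio j, γ k - γ c / ∑ k ∈ Iic j, γ k) * p j := by
  have hrow : ∀ j, Amat γ c j * p j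
      = (if c = j then -(γ c / ∑ k ∈ Iic c, γ k) * p c else 0)
        + if c < j then (γ c / ∑ k ∈ Iio j, γ k - γ c / ∑ k ∈ Iic j, γ k) * p j else 0 := by
    intro j
    rcases lt_trichotomy c j with h | rfl | h
    · simp [Amat, h, h.ne, mul_sub, div_eq_mul_inv]
    · simp [Amat, neg_div]
    · simp [Amat, h.ne', h.not_gt]
  rw [Matrix.mulVec, dotProduct, ← filter_lt_eq_Ioi, sum_filter]
  simp only [hrow, sum_add_distrib, sum_ite_eq, mem_univ, if_true]

theorem mnlDemand_eq_matrix_general {n : ℕ} (γ p : Fin n → ℝ) :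
    ∀ c : Fin n,
      mnlDemand γ p c = (Amat γ).mulVec p c + γ c / ∑ i, γ i := by
  intro c
  obtain ⟨m, rfl⟩ : ∃ m, n = m + 1 := Nat.exists_eq_add_one_of_ne_zero c.pos.ne'
  have hnext := sum_Ici_mul_nextCutoff (fun s => γ c / ∑ i ∈ s, γ i) p c
  have hsplit : mnlDemand γ p c
      = ∑ d ∈ Ici c, (γ c / ∑ i ∈ Iic d, γ i) * nextCutoff p d
        - ∑ d ∈ Ici c, (γ c / ∑ i ∈ Iic d, γ i) * p d := by
    simp only [mnlDemand, mul_sub, sum_sub_distrib]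
  rw [hsplit, hnext, ← Ioi_insert, sum_insert notMem_Ioi_self, Amat_mulVec_apply]
  simp only [sub_mul, sum_sub_distrib]
  ring

/-- In the single-score MNL market with sorted cutoffs, `D = A p + γ / Γ`. -/
theorem mnlDemand_eq_matrix {n : ℕ} (γ p : Fin n → ℝ)
    (hγ : ∀ i, 0 < γ i) (hp : Monotone p)
    (hp0 : ∀ i, p i ∈ Set.Icc (0 : ℝ) 1) :
    ∀ c : Fin n,
      mnlDemand γ p c = (Amat γ).mulVec p c + γ c / ∑ i, γ i :=
  mnlDemand_eq_matrix_general γ p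
end

section
/- The inverse of the matrix A (with A_{ii} = −γ_i/(Σ_{k=1}^{i} γ_k), A_{ij} = γ_i(1/Σ_{k=1}^{j−1} γ_k − 1/Σ_{k=1}^{j} γ_k) for i < j, and 0 for i > j) is the upper triangular matrix B with B_{ii} = −(Σ_{k=1}^{i} γ_k)/γ_i, B_{ij} = −1 for i < j, and B_{ij} = 0 for i > j. -/
open Finset

/-- The claimed inverse `B` of `A`: diagonal `-(Σ_{k ≤ i} γ_k)/γ_i`, `-1` above
the diagonal, `0` below. -/
noncomputable def Bmat {n : ℕ} (γ : Fin n → ℝ) : Matrix (Fin n) (Fin n) ℝ :=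
  Matrix.of fun i j =>
    if i = j then -(∑ k ∈ Iic i, γ k) / γ i
    else if i < j then -1
    else 0

/-!
Both matrices are upper triangular, hence so is `B * A`, and its diagonal entries are
`B i i * A i i = 1`. Write `S j = ∑ k ≤ j, γ k`. Above the diagonal, column `j` of `A` is
`γ k * (1 / S (j - 1) - 1 / S j)`, so against row `i < j` of `B` the weights `γ k` add up to
`S i + ∑ i < k < j, γ k = S (j - 1)`, and the entry is
`-(1 - S (j - 1) / S j) + γ j / S j = 0`. A one-sided inverse of a square matrix is two-sided.
-/

theorem sum_Iic_add_sum_Ioo_eq_sum_Iio {α M : Type*} [LinearOrder α] [LocallyFiniteOrder α]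
    [LocallyFiniteOrderBot α] [AddCommMonoid M] {a b : α} (h : a < b) (f : α → M) :
    ∑ x ∈ Iic a, f x + ∑ x ∈ Ioo a b, f x = ∑ x ∈ Iio b, f x := by
  have hdisj : Disjoint (Iic a) (Ioo a b) :=
    disjoint_left.mpr fun x hxa hxab => (mem_Iic.mp hxa).not_gt (mem_Ioo.mp hxab).1
  have hunion : Iic a ∪ Ioo a b = Iio b := by
    rw [← coe_inj, coe_union, coe_Iic, coe_Ioo, coe_Iio, Set.Iic_union_Ioo_eq_Iio h]
  rw [← sum_union hdisj, hunion]

namespace Matrix.IsUpperTriangular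

variable {m R : Type*} [Fintype m] [LinearOrder m] [LocallyFiniteOrder m]
  [NonUnitalNonAssocSemiring R] {M N : Matrix m m R}

theorem mul_apply_eq_sum_Icc (hM : M.IsUpperTriangular) (hN : N.IsUpperTriangular) (i j : m) :
    (M * N) i j = ∑ k ∈ Icc i j, M i k * N k j := by
  rw [mul_apply]
  refine (sum_subset (subset_univ _) fun k _ hk => ?_).symm
  rcases not_and_or.mp (mem_Icc.not.mp hk) with hik | hkj
  · rw [hM (not_le.mp hik), zero_mul]
  · rw [hN (not_le.mp hkj), mul_zero]

theorem mul_apply_self (hM : M.IsUpperTriangular) (hN : N.IsUpperTriangular) (i : m) :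
    (M * N) i i = M i i * N i i := by
  rw [mul_apply_eq_sum_Icc hM hN, Icc_self, sum_singleton]

end Matrix.IsUpperTriangular

section

variable {n : ℕ} (γ : Fin n → ℝ)

theorem Amat_isUpperTriangular : (Amat γ).IsUpperTriangular := fun i j (h : j < i) => by
  simp [Amat, h.ne', h.not_gt]

theorem Bmat_isUpperTriangular : (Bmat γ).IsUpperTriangular := fun i j (h : j < i) => by
  simp [Bmat, h.ne', h.not_gt]

theorem Amat_apply_self (i : Fin n) : Amat γ i i = -γ i / ∑ k ∈ Iic i, γ k := by
  simp [Amat]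

theorem Amat_apply_of_lt {i j : Fin n} (h : i < j) :
    Amat γ i j = γ i * (1 / ∑ k ∈ Iio j, γ k - 1 / ∑ k ∈ Iic j, γ k) := by
  simp [Amat, h.ne, h]

theorem Bmat_apply_self (i : Fin n) : Bmat γ i i = -(∑ k ∈ Iic i, γ k) / γ i := by
  simp [Bmat]

theorem Bmat_apply_of_lt {i j : Fin n} (h : i < j) : Bmat γ i j = -1 := by
  simp [Bmat, h.ne, h]

variable {γ}

theorem Bmat_mul_Amat_apply_self (hγ : ∀ i, 0 < γ i) (i : Fin n) :
    (Bmat γ * Amat γ) i i = 1 := by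
  have hS : 0 < ∑ k ∈ Iic i, γ k := sum_pos (fun k _ => hγ k) ⟨i, mem_Iic.mpr le_rfl⟩
  rw [(Bmat_isUpperTriangular γ).mul_apply_self (Amat_isUpperTriangular γ), Bmat_apply_self,
    Amat_apply_self]
  field_simp [(hγ i).ne']

theorem Bmat_mul_Amat_apply_of_lt (hγ : ∀ i, 0 < γ i) {i j : Fin n} (h : i < j) :
    (Bmat γ * Amat γ) i j = 0 := by
  have hP : 0 < ∑ k ∈ Iio j, γ k := sum_pos (fun k _ => hγ k) ⟨i, mem_Iio.mpr h⟩
  have hmid : ∑ k ∈ Ioo i j, Bmat γ i k * Amat γ k j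
      = -(∑ k ∈ Ioo i j, γ k) * (1 / ∑ k ∈ Iio j, γ k - 1 / ∑ k ∈ Iic j, γ k) := by
    rw [neg_mul, sum_mul, ← sum_neg_distrib]
    refine sum_congr rfl fun k hk => ?_
    rw [Bmat_apply_of_lt γ (mem_Ioo.mp hk).1, Amat_apply_of_lt γ (mem_Ioo.mp hk).2]
    ring
  calc (Bmat γ * Amat γ) i j
      = Bmat γ i i * Amat γ i j + (Bmat γ i j * Amat γ j j
          + ∑ k ∈ Ioo i j, Bmat γ i k * Amat γ k j) := by
        rw [(Bmat_isUpperTriangular γ).mul_apply_eq_sum_Icc (Amat_isUpperTriangular γ),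
          ← add_sum_Ioc_eq_sum_Icc h.le, ← add_sum_Ioo_eq_sum_Ioc h]
    _ = -(∑ k ∈ Iic i, γ k + ∑ k ∈ Ioo i j, γ k)
          * (1 / ∑ k ∈ Iio j, γ k - 1 / ∑ k ∈ Iic j, γ k) + γ j / ∑ k ∈ Iic j, γ k := by
        rw [hmid, Bmat_apply_self, Amat_apply_of_lt γ h, Bmat_apply_of_lt γ h, Amat_apply_self]
        field_simp [(hγ i).ne']
        ring
    _ = 0 := by
        rw [sum_Iic_add_sum_Ioo_eq_sum_Iio h, ← sum_Iio_add_eq_sum_Iic]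
        field_simp [hP.ne', (add_pos hP (hγ j)).ne']
        ring

theorem Bmat_mul_Amat (hγ : ∀ i, 0 < γ i) : Bmat γ * Amat γ = 1 := by
  ext i j
  rcases lt_trichotomy i j with h | rfl | h
  · rw [Bmat_mul_Amat_apply_of_lt hγ h, Matrix.one_apply_ne h.ne]
  · rw [Bmat_mul_Amat_apply_self hγ, Matrix.one_apply_eq]
  · rw [(Bmat_isUpperTriangular γ).mul (Amat_isUpperTriangular γ) h, Matrix.one_apply_ne h.ne']

end

/-- `B` is the two-sided inverse of `A`. -/
theorem Amat_mul_Bmat {n : ℕ} (γ : Fin n → ℝ) (hγ : ∀ i, 0 < γ i) :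
    Amat γ * Bmat γ = 1 ∧ Bmat γ * Amat γ = 1 :=
  ⟨mul_eq_one_comm.mp (Bmat_mul_Amat hγ), Bmat_mul_Amat hγ⟩
end

section
/- In the single-score MNL market the demand of each school is strictly decreasing in its own cutoff: since the diagonal entries A_{cc} = −γ_c/(Σ_{k=1}^{c} γ_k) of the demand matrix are strictly negative, for sorted cutoff vectors p and p′ differing only in coordinate c with p′_c > p_c (and both still sorted), D_c(p′) < D_c(p). -/
open Finset

theorem nextCutoff_congr {n : ℕ} {p p' : Fin n → ℝ} {d : Fin n}
    (h : ∀ i, d < i → p i = p' i) : nextCutoff p d = nextCutoff p' d := by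
  unfold nextCutoff
  split_ifs with hd
  · exact h _ (Fin.lt_def.2 (Nat.lt_succ_self _))
  · rfl

/-- The slope is the diagonal entry `A_{cc} = -γ_c / ∑_{k ≤ c} γ_k` of the demand matrix:
`p c` enters `D_c` only through the `d = c` term, since `nextCutoff` reads `p` strictly above `d`. -/
theorem mnlDemand_eq_sub_of_forall_ne {n : ℕ} (γ : Fin n → ℝ) {p p' : Fin n → ℝ} {c : Fin n}
    (hdiff : ∀ i, i ≠ c → p i = p' i) :
    mnlDemand γ p' c = mnlDemand γ p c - γ c / (∑ i ∈ Iic c, γ i) * (p' c - p c) := by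
  have hnext : ∀ d ∈ Ici c, nextCutoff p' d = nextCutoff p d := fun d hd =>
    (nextCutoff_congr fun i hi => hdiff i (mem_Ici.1 hd |>.trans_lt hi).ne').symm
  have hdiff_sum : mnlDemand γ p' c - mnlDemand γ p c
      = ∑ d ∈ Ici c, (γ c / ∑ i ∈ Iic d, γ i) * (p d - p' d) := by
    rw [mnlDemand, mnlDemand, ← sum_sub_distrib]
    refine sum_congr rfl fun d hd => ?_
    rw [hnext d hd]
    ring
  rw [sum_eq_single_of_mem c (mem_Ici.2 le_rfl)
    fun d _ hdc => by rw [hdiff d hdc, sub_self, mul_zero]] at hdiff_sum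
  linarith

theorem mnlDemand_strict_anti_own_cutoff_general {n : ℕ} (γ : Fin n → ℝ)
    (hγ : ∀ i, 0 < γ i) (p p' : Fin n → ℝ)
    (c : Fin n) (hdiff : ∀ i, i ≠ c → p i = p' i) (hlt : p c < p' c) :
    mnlDemand γ p' c < mnlDemand γ p c := by
  have hslope : 0 < γ c / ∑ i ∈ Iic c, γ i :=
    div_pos (hγ c) (sum_pos (fun i _ => hγ i) nonempty_Iic)
  rw [mnlDemand_eq_sub_of_forall_ne γ hdiff]
  exact sub_lt_self _ (mul_pos hslope (sub_pos.2 hlt))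

/-- Each school's demand is strictly decreasing in its own cutoff: for sorted
cutoff vectors `p`, `p'` differing only in coordinate `c` with `p' c > p c`,
`D_c(p') < D_c(p)`. -/
theorem mnlDemand_strict_anti_own_cutoff {n : ℕ} (γ : Fin n → ℝ)
    (hγ : ∀ i, 0 < γ i) (p p' : Fin n → ℝ)
    (hp : Monotone p) (hp' : Monotone p')
    (hp0 : ∀ i, p i ∈ Set.Icc (0 : ℝ) 1) (hp0' : ∀ i, p' i ∈ Set.Icc (0 : ℝ) 1)
    (c : Fin n) (hdiff : ∀ i, i ≠ c → p i = p' i) (hlt : p c < p' c) :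
    mnlDemand γ p' c < mnlDemand γ p c :=
  mnlDemand_strict_anti_own_cutoff_general γ hγ p p' c hdiff hlt
end

section
/- Let p̄ = A^{−1}(q − γ/Γ). If schools are indexed so that γ_1/q_1 ≤ γ_2/q_2 ≤ ⋯ ≤ γ_n/q_n, then p̄ is sorted in nondecreasing order; more precisely, for each c < n, p̄_{c+1} − p̄_c = (Σ_{j=1}^{c} γ_j)(q_c/γ_c − q_{c+1}/γ_{c+1}) ≥ 0. -/
/-!
Row `i` of `A⁻¹` applied to a vector `v` gives `-(Σ_{k ≤ i} γ_k / γ_i) v_i - Σ_{k > i} v_k`, so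
consecutive entries differ by `(Σ_{k ≤ i} γ_k)(v_i/γ_i - v_{i+1}/γ_{i+1})`. For `v = q - γ/Γ` the
constant `1/Γ` cancels from `v_i/γ_i`, and the ordering of the ratios `γ_i/q_i` makes every
difference nonnegative.
-/

open Finset

open Matrix

section
variable {n : ℕ}

lemma Bmat_mulVec_apply (γ v : Fin n → ℝ) (i : Fin n) :
    (Bmat γ *ᵥ v) i = -(∑ k ∈ Iic i, γ k) / γ i * v i - ∑ k ∈ Ioi i, v k := by
  simp only [mulVec, dotProduct, Bmat, of_apply, ite_mul, neg_one_mul, zero_mul, sum_ite,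
    sum_const_zero, add_zero, sum_neg_distrib, filter_eq, if_pos (mem_univ i), sum_singleton]
  have hIoi : ({x | ¬i = x} : Finset (Fin n)).filter (i < ·) = Ioi i := by
    ext x
    simp only [mem_filter, mem_univ, true_and, mem_Ioi]
    exact ⟨And.right, fun h => ⟨h.ne, h⟩⟩
  rw [hIoi, neg_div, sub_eq_add_neg]

lemma Iic_eq_insert_of_val_eq_succ {i j : Fin n} (hij : (j : ℕ) = i + 1) :
    Iic j = insert j (Iic i) := by
  ext k; simp only [mem_Iic, mem_insert, Fin.le_def, Fin.ext_iff]; omega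

lemma Ioi_eq_insert_of_val_eq_succ {i j : Fin n} (hij : (j : ℕ) = i + 1) :
    Ioi i = insert j (Ioi j) := by
  ext k; simp only [mem_Ioi, mem_insert, Fin.lt_def, Fin.ext_iff]; omega

lemma Bmat_mulVec_sub_of_val_eq_succ (γ v : Fin n → ℝ) (hγ : ∀ k, γ k ≠ 0) {i j : Fin n}
    (hij : (j : ℕ) = i + 1) :
    (Bmat γ *ᵥ v) j - (Bmat γ *ᵥ v) i = (∑ k ∈ Iic i, γ k) * (v i / γ i - v j / γ j) := by
  have hj : j ∉ Iic i := by simp only [mem_Iic, Fin.le_def]; omega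
  have hj' : j ∉ Ioi j := by simp
  have := hγ j
  rw [Bmat_mulVec_apply, Bmat_mulVec_apply, Iic_eq_insert_of_val_eq_succ hij,
    Ioi_eq_insert_of_val_eq_succ hij, sum_insert hj, sum_insert hj']
  field_simp
  ring
end

lemma Fin.monotone_of_le_of_val_eq_succ {α : Type*} [Preorder α] {n : ℕ} {f : Fin n → α}
    (h : ∀ i j : Fin n, (j : ℕ) = i + 1 → f i ≤ f j) : Monotone f := by
  cases n with
  | zero => exact fun a => a.elim0
  | succ m => exact Fin.monotone_iff_le_succ.2 fun i => h _ _ (by simp)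

/-- If schools are indexed in ascending order of competitiveness ratios
`γ_c / q_c`, then `p̄ = A⁻¹ (q - γ/Γ)` is sorted in nondecreasing order, and
`p̄_{c+1} - p̄_c = (Σ_{j ≤ c} γ_j)(q_c/γ_c - q_{c+1}/γ_{c+1}) ≥ 0`. -/
theorem pbar_sorted {n : ℕ} (γ q : Fin n → ℝ)
    (hγ : ∀ i, 0 < γ i) (hq : ∀ i, 0 < q i)
    (hratio : ∀ i j : Fin n, i ≤ j → γ i / q i ≤ γ j / q j) :
    letI Γ : ℝ := ∑ i, γ i
    letI pbar : Fin n → ℝ := (Bmat γ).mulVec fun c => q c - γ c / Γ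
    (∀ (c : Fin n) (h : (c : ℕ) + 1 < n),
        pbar ⟨(c : ℕ) + 1, h⟩ - pbar c =
          (∑ j ∈ Iic c, γ j) * (q c / γ c - q ⟨(c : ℕ) + 1, h⟩ / γ ⟨(c : ℕ) + 1, h⟩) ∧
        0 ≤ pbar ⟨(c : ℕ) + 1, h⟩ - pbar c) ∧
    Monotone pbar := by
  set pbar : Fin n → ℝ := Bmat γ *ᵥ fun c => q c - γ c / ∑ i, γ i
  have hstep : ∀ i j : Fin n, (j : ℕ) = i + 1 →
      pbar j - pbar i = (∑ k ∈ Iic i, γ k) * (q i / γ i - q j / γ j) := by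
    intro i j hij
    have := (hγ i).ne'
    have := (hγ j).ne'
    rw [Bmat_mulVec_sub_of_val_eq_succ _ _ (fun k => (hγ k).ne') hij]
    field_simp
    ring
  have hstep_nonneg : ∀ i j : Fin n, (j : ℕ) = i + 1 →
      0 ≤ (∑ k ∈ Iic i, γ k) * (q i / γ i - q j / γ j) := by
    intro i j hij
    have hle : q j / γ j ≤ q i / γ i := by
      simpa only [inv_div] using
        inv_anti₀ (div_pos (hγ i) (hq i)) (hratio i j (Fin.le_def.2 (by omega)))
    exact mul_nonneg (sum_nonneg fun k _ => (hγ k).le) (sub_nonneg.2 hle)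
  refine ⟨fun c h => ?_, Fin.monotone_of_le_of_val_eq_succ fun i j hij => ?_⟩
  · rw [hstep c ⟨c + 1, h⟩ rfl]
    exact ⟨rfl, hstep_nonneg c _ rfl⟩
  · rw [← sub_nonneg, hstep i j hij]
    exact hstep_nonneg i j hij
end

section
/- In the single-score MNL equilibrium p̂ = [A^{−1}(q − γ/Γ)]^+, any school c with p̂_c > 0 has demand exactly q_c, and any school c with p̂_c = 0 (letting b be the smallest index with p̂_b > 0) has demand D_c = (γ_c/Σ_{i=1}^{b−1} γ_i)(Σ_{i=1}^{b−1} γ_i/Γ − Σ_{j=b}^{n}(q_j − γ_j/Γ)) which equals −(γ_c/Σ_{i=1}^{b−1}γ_i) Σ_{j=b}^{n}(q_j − γ_j/Γ) + γ_c/Γ ≤ q_c. -/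
open Finset

/-!
Write `v = q - γ/Γ` and `y = Bmat γ *ᵥ v`, so that `p̂ = y⁺`. Sorting schools by `γ/q` makes
`v_j/γ_j = q_j/γ_j - 1/Γ` nonincreasing, which makes `y` nondecreasing; hence `p̂` vanishes
before `b` and agrees with `y` from `b` on. Row `c` of the upper triangular `A = Amat γ` only
sees entries of index `≥ c`, and on such a tail `A` undoes `Bmat γ` because the row sums
telescope. So a school with `p̂_c > 0` gets demand `v_c + γ_c/Γ = q_c`, while for `c < b`
telescoping gives `(A p̂)_c = -γ_c Σ_{j≥b} v_j / Σ_{i<b} γ_i`, which the zero cutoff of school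
`b - 1` bounds by `γ_c v_{b-1}/γ_{b-1} ≤ v_c`.
-/

section

variable {α M : Type*} [LinearOrder α] [LocallyFiniteOrderBot α] [AddCommMonoid M]

theorem sum_Iic_succ_of_not_isMax [SuccOrder α] (f : α → M) {c : α} (hc : ¬IsMax c) :
    ∑ k ∈ Iic (Order.succ c), f k = f (Order.succ c) + ∑ k ∈ Iic c, f k := by
  rw [← Iio_insert, sum_insert notMem_Iio_self, Iio_succ_eq_Iic_of_not_isMax hc]

theorem sum_Iic_pos_of_pos [PartialOrder M] [IsOrderedCancelAddMonoid M] {f : α → M}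
    (hf : ∀ i, 0 < f i) (c : α) : 0 < ∑ k ∈ Iic c, f k :=
  sum_pos (fun i _ => hf i) nonempty_Iic

theorem antitone_sub_div_div_of_monotone_div {ι : Type*} [Preorder ι] {γ q : ι → ℝ}
    (hγ : ∀ i, 0 < γ i) (hq : ∀ i, 0 < q i) (hratio : Monotone fun i => γ i / q i) (Γ : ℝ) :
    Antitone fun j => (q j - γ j / Γ) / γ j := fun i j hij => by
  have hqγ : q j / γ j ≤ q i / γ i := by
    rw [← inv_div, ← inv_div (γ i)]
    exact inv_anti₀ (div_pos (hγ i) (hq i)) (hratio hij)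
  simp only [sub_div, div_div_cancel_left' (hγ i).ne', div_div_cancel_left' (hγ j).ne']
  linarith

end

namespace MNL

variable {n : ℕ} {γ : Fin n → ℝ}

theorem Amat_mulVec_apply (x : Fin n → ℝ) (c : Fin n) :
    (Amat γ).mulVec x c = -γ c / (∑ k ∈ Iic c, γ k) * x c +
      γ c * ∑ j ∈ Ioi c, (1 / ∑ k ∈ Iio j, γ k - 1 / ∑ k ∈ Iic j, γ k) * x j := by
  rw [Matrix.mulVec, dotProduct, ← sum_subset (subset_univ (Ici c)), ← Ioi_insert,
    sum_insert notMem_Ioi_self, mul_sum]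
  · congr 1
    · simp [Amat]
    · refine sum_congr rfl fun j hj => ?_
      have hcj : c < j := mem_Ioi.1 hj
      simp [Amat, hcj.ne, hcj, mul_assoc]
  · intro j _ hj
    have hjc : j < c := by simpa using hj
    simp [Amat, hjc.ne', hjc.not_gt]

theorem Bmat_mulVec_apply (v : Fin n → ℝ) (c : Fin n) :
    (Bmat γ).mulVec v c = -(∑ k ∈ Iic c, γ k) / γ c * v c - ∑ j ∈ Ioi c, v j := by
  rw [Matrix.mulVec, dotProduct, ← sum_subset (subset_univ (Ici c)), ← Ioi_insert,
    sum_insert notMem_Ioi_self, sub_eq_add_neg, ← sum_neg_distrib (s := Ioi c)]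
  · congr 1
    · simp [Bmat]
    · refine sum_congr rfl fun j hj => ?_
      have hcj : c < j := mem_Ioi.1 hj
      simp [Bmat, hcj.ne, hcj]
  · intro j _ hj
    have hjc : j < c := by simpa using hj
    simp [Bmat, hjc.ne', hjc.not_gt]

variable (hγ : ∀ i, 0 < γ i)
include hγ

theorem sum_Ioi_mul_Bmat_mulVec (v : Fin n → ℝ) (c : Fin n) :
    ∑ j ∈ Ioi c, (1 / ∑ k ∈ Iio j, γ k - 1 / ∑ k ∈ Iic j, γ k) * (Bmat γ).mulVec v j =
      -(∑ j ∈ Ioi c, v j) / ∑ k ∈ Iic c, γ k := by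
  induction c using WellFoundedGT.induction with
  | _ c ih =>
  by_cases hc : IsMax c
  · simp [Ioi_eq_empty.2 hc]
  rw [← Ici_succ_eq_Ioi_of_not_isMax hc, ← Ioi_insert, sum_insert notMem_Ioi_self,
    sum_insert notMem_Ioi_self, ih _ (Order.lt_succ_of_not_isMax hc), Bmat_mulVec_apply,
    Iio_succ_eq_Iic_of_not_isMax hc, sum_Iic_succ_of_not_isMax γ hc]
  have := hγ (Order.succ c)
  have := sum_Iic_pos_of_pos hγ c
  field_simp
  ring

theorem Amat_mulVec_apply_of_eqOn_Ici {x v : Fin n → ℝ} {c : Fin n}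
    (hx : ∀ j, c ≤ j → x j = (Bmat γ).mulVec v j) : (Amat γ).mulVec x c = v c := by
  have hsum : ∑ j ∈ Ioi c, (1 / ∑ k ∈ Iio j, γ k - 1 / ∑ k ∈ Iic j, γ k) * x j =
      ∑ j ∈ Ioi c, (1 / ∑ k ∈ Iio j, γ k - 1 / ∑ k ∈ Iic j, γ k) * (Bmat γ).mulVec v j :=
    sum_congr rfl fun j hj => by rw [hx j (mem_Ioi.1 hj).le]
  rw [Amat_mulVec_apply, hsum, sum_Ioi_mul_Bmat_mulVec hγ, hx c le_rfl, Bmat_mulVec_apply]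
  have := hγ c
  have := sum_Iic_pos_of_pos hγ c
  field_simp
  ring

theorem Amat_mulVec_apply_of_eq_zero_of_lt {x v : Fin n → ℝ} {b c : Fin n} (hcb : c < b)
    (hx₀ : ∀ j < b, x j = 0) (hx : ∀ j, b ≤ j → x j = (Bmat γ).mulVec v j) :
    (Amat γ).mulVec x c = -γ c * (∑ j ∈ Ici b, v j) / ∑ k ∈ Iio b, γ k := by
  have hb : ¬IsMin b := not_isMin_of_lt hcb
  have hsum : ∑ j ∈ Ioi c, (1 / ∑ k ∈ Iio j, γ k - 1 / ∑ k ∈ Iic j, γ k) * x j =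
      ∑ j ∈ Ioi (Order.pred b),
        (1 / ∑ k ∈ Iio j, γ k - 1 / ∑ k ∈ Iic j, γ k) * (Bmat γ).mulVec v j := by
    rw [Ioi_pred_eq_Ici_of_not_isMin hb,
      ← sum_subset fun j hj => mem_Ioi.2 (hcb.trans_le (mem_Ici.1 hj))]
    · exact sum_congr rfl fun j hj => by rw [hx j (mem_Ici.1 hj)]
    · intro j _ hj
      rw [hx₀ j (not_le.1 (mt mem_Ici.2 hj)), mul_zero]
  rw [Amat_mulVec_apply, hx₀ c hcb, hsum, sum_Ioi_mul_Bmat_mulVec hγ,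
    Ioi_pred_eq_Ici_of_not_isMin hb, Iic_pred_eq_Iio_of_not_isMin hb]
  ring

theorem monotone_Bmat_mulVec {v : Fin n → ℝ} (hv : Antitone fun j => v j / γ j) :
    Monotone ((Bmat γ).mulVec v) := by
  refine monotone_of_le_succ fun c hc => ?_
  rw [Bmat_mulVec_apply, Bmat_mulVec_apply, sum_Iic_succ_of_not_isMax γ hc,
    ← Ici_succ_eq_Ioi_of_not_isMax hc, ← Ioi_insert, sum_insert notMem_Ioi_self]
  -- the increment is `(∑ k ∈ Iic c, γ k) * (v c / γ c - v c' / γ c')` with `c' = succ c`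
  have hstep : (∑ k ∈ Iic c, γ k) * (v (Order.succ c) / γ (Order.succ c)) ≤
      (∑ k ∈ Iic c, γ k) * (v c / γ c) :=
    mul_le_mul_of_nonneg_left (hv (Order.le_succ c)) (sum_Iic_pos_of_pos hγ c).le
  have := hγ (Order.succ c)
  have e₁ : -(∑ k ∈ Iic c, γ k) / γ c * v c = -((∑ k ∈ Iic c, γ k) * (v c / γ c)) := by ring
  have e₂ : -(γ (Order.succ c) + ∑ k ∈ Iic c, γ k) / γ (Order.succ c) * v (Order.succ c) =
      -v (Order.succ c) - (∑ k ∈ Iic c, γ k) * (v (Order.succ c) / γ (Order.succ c)) := by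
    field_simp
    ring
  linarith

theorem neg_mul_sum_Ici_div_le_of_Bmat_mulVec_nonpos {v : Fin n → ℝ} {b c : Fin n}
    (hv : Antitone fun j => v j / γ j) (hcb : c < b)
    (hy : ∀ j < b, (Bmat γ).mulVec v j ≤ 0) :
    -γ c * (∑ j ∈ Ici b, v j) / ∑ k ∈ Iio b, γ k ≤ v c := by
  have hb : ¬IsMin b := not_isMin_of_lt hcb
  have ha := hy (Order.pred b) (Order.pred_lt_of_not_isMin hb)
  rw [Bmat_mulVec_apply, Iic_pred_eq_Iio_of_not_isMin hb, Ioi_pred_eq_Ici_of_not_isMin hb] at ha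
  have hS : 0 < ∑ k ∈ Iio b, γ k := sum_pos (fun i _ => hγ i) ⟨c, mem_Iio.2 hcb⟩
  have hra := mul_le_mul_of_nonneg_left (hv (Order.le_pred_of_lt hcb)) hS.le
  have hγc := hγ c
  have e : -(∑ k ∈ Iio b, γ k) / γ (Order.pred b) * v (Order.pred b) =
      -((∑ k ∈ Iio b, γ k) * (v (Order.pred b) / γ (Order.pred b))) := by ring
  rw [div_le_iff₀ hS]
  calc -γ c * ∑ j ∈ Ici b, v j = γ c * -∑ j ∈ Ici b, v j := by ring
    _ ≤ γ c * ((∑ k ∈ Iio b, γ k) * (v c / γ c)) := by gcongr; linarith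
    _ = v c * ∑ k ∈ Iio b, γ k := by field_simp

end MNL

open MNL

theorem mnl_equilibrium_demand_general {n : ℕ} (γ q : Fin n → ℝ)
    (hγ : ∀ i, 0 < γ i) (hq : ∀ i, 0 < q i)
    (hratio : ∀ i j : Fin n, i ≤ j → γ i / q i ≤ γ j / q j)
    (Γ : ℝ)
    (phat : Fin n → ℝ)
    (hphat : phat = fun c => max 0 (((Bmat γ).mulVec fun c => q c - γ c / Γ) c))
    (D : Fin n → ℝ) (hD : D = fun c => (Amat γ).mulVec phat c + γ c / Γ)
    (b : Fin n) (hb : 0 < phat b) (hbfirst : ∀ j, j < b → phat j = 0) :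
    (∀ c, 0 < phat c → D c = q c) ∧
    (∀ c, c < b →
      D c = -(γ c / ∑ i ∈ Iio b, γ i) * (∑ j ∈ Ici b, (q j - γ j / Γ)) + γ c / Γ ∧
      D c = (γ c / ∑ i ∈ Iio b, γ i) *
        ((∑ i ∈ Iio b, γ i) / Γ - ∑ j ∈ Ici b, (q j - γ j / Γ)) ∧
      D c ≤ q c) := by
  subst hphat hD
  set v : Fin n → ℝ := fun c => q c - γ c / Γ
  set y := (Bmat γ).mulVec v
  have hv : Antitone fun j => v j / γ j :=
    antitone_sub_div_div_of_monotone_div hγ hq hratio Γ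
  have hyb : 0 < y b := by simpa using hb
  have hpos : ∀ j, b ≤ j → max 0 (y j) = y j := fun j hj =>
    max_eq_right (hyb.trans_le (monotone_Bmat_mulVec hγ hv hj)).le
  refine ⟨fun c hc => ?_, fun c hcb => ?_⟩
  · have hbc : b ≤ c := not_lt.1 fun h => hc.ne' (hbfirst c h)
    simp only [Amat_mulVec_apply_of_eqOn_Ici hγ fun j hj => hpos j (hbc.trans hj), v,
      sub_add_cancel]
  · have hS : 0 < ∑ k ∈ Iio b, γ k := sum_pos (fun i _ => hγ i) ⟨c, mem_Iio.2 hcb⟩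
    have hle := neg_mul_sum_Ici_div_le_of_Bmat_mulVec_nonpos hγ hv hcb
      fun j hj => max_eq_left_iff.1 (hbfirst j hj)
    simp only [Amat_mulVec_apply_of_eq_zero_of_lt hγ hcb hbfirst hpos]
    refine ⟨by ring, by field_simp; ring, ?_⟩
    linarith [show v c = q c - γ c / Γ from rfl]

/-- At the MNL equilibrium `p̂ = [A⁻¹(q - γ/Γ)]⁺`, every school with a positive
cutoff fills its capacity exactly, and every school with a zero cutoff (below
the first positive-cutoff index `b`) has demand
`D_c = -(γ_c/Σ_{i<b} γ_i) Σ_{j≥b} (q_j - γ_j/Γ) + γ_c/Γ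
    = (γ_c/Σ_{i<b} γ_i)(Σ_{i<b} γ_i/Γ - Σ_{j≥b}(q_j - γ_j/Γ)) ≤ q_c`. -/
theorem mnl_equilibrium_demand {n : ℕ} (γ q : Fin n → ℝ)
    (hγ : ∀ i, 0 < γ i) (hq : ∀ i, 0 < q i)
    (hratio : ∀ i j : Fin n, i ≤ j → γ i / q i ≤ γ j / q j)
    (Γ : ℝ) (hΓ : Γ = ∑ i, γ i)
    (phat : Fin n → ℝ)
    (hphat : phat = fun c => max 0 (((Bmat γ).mulVec fun c => q c - γ c / Γ) c))
    (D : Fin n → ℝ) (hD : D = fun c => (Amat γ).mulVec phat c + γ c / Γ)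
    (b : Fin n) (hb : 0 < phat b) (hbfirst : ∀ j, j < b → phat j = 0)
    (hbpos : 0 < (b : ℕ)) :
    (∀ c, 0 < phat c → D c = q c) ∧
    (∀ c, c < b →
      D c = -(γ c / ∑ i ∈ Iio b, γ i) * (∑ j ∈ Ici b, (q j - γ j / Γ)) + γ c / Γ ∧
      D c = (γ c / ∑ i ∈ Iio b, γ i) *
        ((∑ i ∈ Iio b, γ i) / Γ - ∑ j ∈ Ici b, (q j - γ j / Γ)) ∧
      D c ≤ q c) :=
  mnl_equilibrium_demand_general γ q hγ hq hratio Γ phat hphat D hD b hb hbfirst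
end

section
/- In the single-score MNL market, at a sorted cutoff vector with distinct coordinates, the partial derivative of school c's demand with respect to its own quality γ_c is ∂D_c/∂γ_c = Σ_{d=c}^{n} (1/Σ_{i=1}^{d} γ_i)(1 − γ_c/Σ_{i=1}^{d} γ_i)(p_{d+1} − p_d), which is strictly positive whenever n ≥ 2, c < n, and p is strictly increasing. -/
open Finset

/-!
Each summand of the demand depends on `γ_c` through the share `g / (g + B)`, where `B` is the
total quality of the other schools in `Iic d`; its derivative `B / (γ_c + B)²` equals
`(1 / S)(1 - γ_c / S)` with `S = γ_c + B`. Positivity: every summand is nonnegative, and the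
summand `d = c + 1` is positive because then `B ≥ γ_{c+1} > 0` and `p_{c+2} > p_{c+1}`.
-/

theorem hasDerivAt_div_add_const {𝕜 : Type*} [NontriviallyNormedField 𝕜] {x : 𝕜} (B : 𝕜)
    (hx : x + B ≠ 0) :
    HasDerivAt (fun g => g / (g + B)) (B / (x + B) ^ 2) x := by
  refine ((hasDerivAt_id x).div ((hasDerivAt_id x).add_const B) hx).congr_deriv ?_
  simp

section Share

variable {ι : Type*} [DecidableEq ι] {s : Finset ι} {γ : ι → ℝ} {c : ι}

theorem sum_sub_eq_sum_sdiff_singleton (hc : c ∈ s) :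
    ∑ i ∈ s, γ i - γ c = ∑ i ∈ s \ {c}, γ i := by
  rw [← Function.update_eq_self c γ, sum_update_of_mem hc, Function.update_eq_self]
  ring

theorem one_div_mul_one_sub_div_sum_eq (hc : c ∈ s) (hS : ∑ i ∈ s, γ i ≠ 0) :
    (1 / ∑ i ∈ s, γ i) * (1 - γ c / ∑ i ∈ s, γ i) =
      (∑ i ∈ s \ {c}, γ i) / (∑ i ∈ s, γ i) ^ 2 := by
  rw [← sum_sub_eq_sum_sdiff_singleton hc]
  field_simp

theorem hasDerivAt_update_div_sum_update (hc : c ∈ s) (hS : ∑ i ∈ s, γ i ≠ 0) :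
    HasDerivAt (fun g => Function.update γ c g c / ∑ i ∈ s, Function.update γ c g i)
      ((1 / ∑ i ∈ s, γ i) * (1 - γ c / ∑ i ∈ s, γ i)) (γ c) := by
  have hsplit : ∑ i ∈ s, γ i = γ c + ∑ i ∈ s \ {c}, γ i := by
    rw [← sum_sub_eq_sum_sdiff_singleton hc]
    ring
  simp only [sum_update_of_mem hc, Function.update_self]
  rw [one_div_mul_one_sub_div_sum_eq hc hS, hsplit]
  exact hasDerivAt_div_add_const _ (hsplit ▸ hS)

theorem one_div_mul_one_sub_div_sum_nonneg (hγ : ∀ i ∈ s, 0 < γ i) (hc : c ∈ s) :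
    0 ≤ (1 / ∑ i ∈ s, γ i) * (1 - γ c / ∑ i ∈ s, γ i) := by
  rw [one_div_mul_one_sub_div_sum_eq hc (sum_pos hγ ⟨c, hc⟩).ne']
  exact div_nonneg (sum_nonneg fun i hi => (hγ i (sdiff_subset hi)).le) (sq_nonneg _)

theorem one_div_mul_one_sub_div_sum_pos (hγ : ∀ i ∈ s, 0 < γ i) (hc : c ∈ s) {j : ι}
    (hj : j ∈ s) (hjc : j ≠ c) :
    0 < (1 / ∑ i ∈ s, γ i) * (1 - γ c / ∑ i ∈ s, γ i) := by
  have hS : 0 < ∑ i ∈ s, γ i := sum_pos hγ ⟨c, hc⟩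
  rw [one_div_mul_one_sub_div_sum_eq hc hS.ne']
  refine div_pos (sum_pos (fun i hi => hγ i (sdiff_subset hi)) ⟨j, ?_⟩) (by positivity)
  simpa [hjc] using hj

end Share

theorem mnl_demand_deriv_own_quality_general {n : ℕ} (γ p : Fin n → ℝ)
    (hγ : ∀ i, 0 < γ i)
    (hpstrict : ∀ d : Fin n, p d < nextCutoff p d)
    (c : Fin n) :
    HasDerivAt
      (fun g : ℝ => ∑ d ∈ Ici c,
        (Function.update γ c g c / ∑ i ∈ Iic d, Function.update γ c g i) *
          (nextCutoff p d - p d))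
      (∑ d ∈ Ici c,
        (1 / ∑ i ∈ Iic d, γ i) * (1 - γ c / ∑ i ∈ Iic d, γ i) *
          (nextCutoff p d - p d))
      (γ c) ∧
    ((c : ℕ) + 1 < n →
      0 < ∑ d ∈ Ici c,
        (1 / ∑ i ∈ Iic d, γ i) * (1 - γ c / ∑ i ∈ Iic d, γ i) *
          (nextCutoff p d - p d)) := by
  have hγ' (d : Fin n) : ∀ i ∈ Iic d, 0 < γ i := fun i _ => hγ i
  have hcIic {d : Fin n} (hd : d ∈ Ici c) : c ∈ Iic d := mem_Iic.2 (mem_Ici.1 hd)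
  refine ⟨HasDerivAt.fun_sum fun d hd => ?_, fun hc => ?_⟩
  · exact (hasDerivAt_update_div_sum_update (hcIic hd)
      (sum_pos (hγ' d) ⟨d, mem_Iic.2 le_rfl⟩).ne').mul_const _
  · have hcd : c < ⟨c + 1, hc⟩ := Fin.lt_def.2 (Nat.lt_succ_self _)
    refine sum_pos' (fun d hd => mul_nonneg
      (one_div_mul_one_sub_div_sum_nonneg (hγ' d) (hcIic hd)) (sub_pos.2 (hpstrict d)).le)
      ⟨⟨c + 1, hc⟩, mem_Ici.2 hcd.le, mul_pos ?_ (sub_pos.2 (hpstrict _))⟩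
    exact one_div_mul_one_sub_div_sum_pos (hγ' _) (mem_Iic.2 hcd.le) (mem_Iic.2 le_rfl) hcd.ne'

/-- The derivative of school `c`'s demand with respect to its own quality `γ_c`
is `Σ_{d ≥ c} (1/Σ_{i ≤ d} γ_i)(1 - γ_c/Σ_{i ≤ d} γ_i)(p_{d+1} - p_d)`, which
is strictly positive when `c` is not the last school and the cutoffs are
strictly increasing. -/
theorem mnl_demand_deriv_own_quality {n : ℕ} (γ p : Fin n → ℝ)
    (hγ : ∀ i, 0 < γ i)
    (hp0 : ∀ i, 0 ≤ p i) (hpstrict : ∀ d : Fin n, p d < nextCutoff p d)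
    (c : Fin n) :
    HasDerivAt
      (fun g : ℝ => ∑ d ∈ Ici c,
        (Function.update γ c g c / ∑ i ∈ Iic d, Function.update γ c g i) *
          (nextCutoff p d - p d))
      (∑ d ∈ Ici c,
        (1 / ∑ i ∈ Iic d, γ i) * (1 - γ c / ∑ i ∈ Iic d, γ i) *
          (nextCutoff p d - p d))
      (γ c) ∧
    ((c : ℕ) + 1 < n →
      0 < ∑ d ∈ Ici c,
        (1 / ∑ i ∈ Iic d, γ i) * (1 - γ c / ∑ i ∈ Iic d, γ i) *
          (nextCutoff p d - p d)) :=
  mnl_demand_deriv_own_quality_general γ p hγ hpstrict c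
end

section
/- In the single-score MNL market, the partial derivative of D_c with respect to the quality γ_{ĉ} of another school ĉ ≠ c is ∂D_c/∂γ_{ĉ} = Σ_{d=max{c,ĉ}}^{n} (−γ_c/(Σ_{i=1}^{d} γ_i)^2)(p_{d+1} − p_d) ≤ 0, with strict inequality when the relevant cutoff differences are not all zero. -/
open Finset

/-!
Only the shares with `d ≥ ch` see `γ_ch` in their denominator `Σ_{i ≤ d} γ_i`, and there it
enters linearly with slope one, so each such share `γ_c / Σ_{i ≤ d} γ_i` has derivative
`-γ_c / (Σ_{i ≤ d} γ_i)²`. Every term of the derivative is this negative weight times a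
nonnegative cutoff gap, hence the sign.
-/

section

variable {ι : Type*} [DecidableEq ι]

theorem hasDerivAt_sum_update (s : Finset ι) (γ : ι → ℝ) (j : ι) :
    HasDerivAt (fun g : ℝ => ∑ i ∈ s, Function.update γ j g i)
      (if j ∈ s then 1 else 0) (γ j) := by
  by_cases hj : j ∈ s
  · simp only [Finset.sum_update_of_mem hj, hj, if_true]
    exact (hasDerivAt_id _).add_const _
  · simp only [Finset.sum_update_of_notMem hj, hj, if_false]
    exact hasDerivAt_const _ _

theorem hasDerivAt_div_sum_update (a : ℝ) (s : Finset ι) (γ : ι → ℝ) (j : ι)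
    (hs : ∑ i ∈ s, γ i ≠ 0) :
    HasDerivAt (fun g : ℝ => a / ∑ i ∈ s, Function.update γ j g i)
      (if j ∈ s then -a / (∑ i ∈ s, γ i) ^ 2 else 0) (γ j) := by
  have hsum := hasDerivAt_sum_update s γ j
  rw [← Function.update_eq_self j γ] at hs
  refine ((hasDerivAt_const (γ j) a).div hsum hs).congr_deriv ?_
  split_ifs <;> simp [Function.update_eq_self]

end

theorem sum_Ici_ite_le_eq_sum_Ici_max {α M : Type*} [LinearOrder α] [LocallyFiniteOrderTop α]
    [AddCommMonoid M] (c ch : α) (f : α → M) :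
    ∑ d ∈ Ici c, (if ch ≤ d then f d else 0) = ∑ d ∈ Ici (max c ch), f d := by
  rw [← Finset.sum_filter]
  congr 1
  ext d
  simp

theorem neg_div_sq_mul_nonpos {a S Δ : ℝ} (ha : 0 ≤ a) (hΔ : 0 ≤ Δ) :
    -a / S ^ 2 * Δ ≤ 0 :=
  mul_nonpos_of_nonpos_of_nonneg (div_nonpos_of_nonpos_of_nonneg (neg_nonpos.2 ha) (sq_nonneg S))
    hΔ

theorem neg_div_sq_mul_neg {a S Δ : ℝ} (ha : 0 < a) (hS : S ≠ 0) (hΔ : 0 < Δ) :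
    -a / S ^ 2 * Δ < 0 :=
  mul_neg_of_neg_of_pos (div_neg_of_neg_of_pos (neg_neg_of_pos ha) (by positivity)) hΔ

theorem mnl_demand_deriv_other_quality_general {n : ℕ} (γ p : Fin n → ℝ)
    (hγ : ∀ i, 0 < γ i)
    (hple : ∀ d : Fin n, p d ≤ nextCutoff p d)
    (c ch : Fin n) :
    HasDerivAt
      (fun g : ℝ => ∑ d ∈ Ici c,
        (γ c / ∑ i ∈ Iic d, Function.update γ ch g i) * (nextCutoff p d - p d))
      (∑ d ∈ Ici (max c ch),
        (-γ c / (∑ i ∈ Iic d, γ i) ^ 2) * (nextCutoff p d - p d))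
      (γ ch) ∧
    (∑ d ∈ Ici (max c ch),
        (-γ c / (∑ i ∈ Iic d, γ i) ^ 2) * (nextCutoff p d - p d)) ≤ 0 ∧
    ((∃ d ∈ Ici (max c ch), nextCutoff p d - p d ≠ 0) →
      (∑ d ∈ Ici (max c ch),
        (-γ c / (∑ i ∈ Iic d, γ i) ^ 2) * (nextCutoff p d - p d)) < 0) := by
  have hS : ∀ d : Fin n, ∑ i ∈ Iic d, γ i ≠ 0 := fun d =>
    (Finset.sum_pos (fun i _ => hγ i) ⟨d, mem_Iic.2 le_rfl⟩).ne'
  have hΔ : ∀ d : Fin n, 0 ≤ nextCutoff p d - p d := fun d => sub_nonneg.2 (hple d)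
  have hterm : ∀ d : Fin n, -γ c / (∑ i ∈ Iic d, γ i) ^ 2 * (nextCutoff p d - p d) ≤ 0 :=
    fun d => neg_div_sq_mul_nonpos (hγ c).le (hΔ d)
  refine ⟨?_, Finset.sum_nonpos fun d _ => hterm d, ?_⟩
  · rw [← sum_Ici_ite_le_eq_sum_Ici_max]
    refine HasDerivAt.fun_sum fun d _ => ?_
    simpa only [mem_Iic, ite_mul, zero_mul] using
      (hasDerivAt_div_sum_update (γ c) (Iic d) γ ch (hS d)).mul_const (nextCutoff p d - p d)
  · rintro ⟨d, hd, hgap⟩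
    exact Finset.sum_neg' (fun e _ => hterm e)
      ⟨d, hd, neg_div_sq_mul_neg (hγ c) (hS d) ((hΔ d).lt_of_ne' hgap)⟩

/-- The derivative of school `c`'s demand with respect to the quality `γ_ch` of
another school `ch ≠ c` is
`Σ_{d ≥ max{c,ch}} (-γ_c/(Σ_{i ≤ d} γ_i)²)(p_{d+1} - p_d) ≤ 0`, strictly
negative when some relevant cutoff difference is nonzero. -/
theorem mnl_demand_deriv_other_quality {n : ℕ} (γ p : Fin n → ℝ)
    (hγ : ∀ i, 0 < γ i)
    (hp : Monotone p) (hp0 : ∀ i, 0 ≤ p i) (hple : ∀ d : Fin n, p d ≤ nextCutoff p d)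
    (c ch : Fin n) (hne : ch ≠ c) :
    HasDerivAt
      (fun g : ℝ => ∑ d ∈ Ici c,
        (γ c / ∑ i ∈ Iic d, Function.update γ ch g i) * (nextCutoff p d - p d))
      (∑ d ∈ Ici (max c ch),
        (-γ c / (∑ i ∈ Iic d, γ i) ^ 2) * (nextCutoff p d - p d))
      (γ ch) ∧
    (∑ d ∈ Ici (max c ch),
        (-γ c / (∑ i ∈ Iic d, γ i) ^ 2) * (nextCutoff p d - p d)) ≤ 0 ∧
    ((∃ d ∈ Ici (max c ch), nextCutoff p d - p d ≠ 0) →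
      (∑ d ∈ Ici (max c ch),
        (-γ c / (∑ i ∈ Iic d, γ i) ^ 2) * (nextCutoff p d - p d)) < 0) :=
  mnl_demand_deriv_other_quality_general γ p hγ hple c ch
end

section
/- Inverse optimization recursion: suppose demand values D_c > 0 and sorted cutoffs 0 ≤ p_1 ≤ ⋯ ≤ p_n < 1 (p_{n+1} = 1) arise from the single-score MNL model with parameters γ normalized so Σ_c γ_c = 1. Then γ_n = D_n/(1 − p_n), and for c < n, γ_c = D_c / (Σ_{d=c}^{n} (p_{d+1} − p_d)/(1 − Σ_{j=d+1}^{n} γ_j)); i.e., these recursively defined values are the unique positive solution of the system D_c = Σ_{d=c}^{n} (γ_c/Σ_{i=1}^{d} γ_i)(p_{d+1} − p_d) with Σ γ_c = 1. -/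
open Finset

/-!
Since `Σ γ = 1`, the share `Σ_{i ≤ d} γ_i` equals `1 - Σ_{j > d} γ_j`, so the demand system
reads `D_c = γ_c · F_c(γ)`, where the factor `F_c(γ)` (`demandFactor`) depends only on the
weights of the schools after `c` and is positive (its last summand is `(1 - p_n) / 1`).
Solving for `γ_c` gives the recursion, and a downward induction on `c` shows that any two
normalized solutions agree.
-/

theorem Finset.sum_Iic_eq_sum_sub_sum_Ioi {ι M : Type*} [Fintype ι] [LinearOrder ι]
    [LocallyFiniteOrderBot ι] [LocallyFiniteOrderTop ι] [AddCommGroup M] (f : ι → M) (d : ι) :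
    ∑ i ∈ Iic d, f i = ∑ i, f i - ∑ j ∈ Ioi d, f j := by
  have hcompl : (Iic d)ᶜ = Ioi d := by ext j; simp
  rw [← sum_add_sum_compl (Iic d) f, hcompl, add_sub_cancel_right]

section MNL

variable {n : ℕ} (p : Fin n → ℝ)

lemma nextCutoff_eq_one {d : Fin n} (h : n ≤ (d : ℕ) + 1) : nextCutoff p d = 1 :=
  dif_neg (by omega)

lemma sub_nonneg_nextCutoff (hp : Monotone p) (hp1 : ∀ i, p i < 1) (d : Fin n) :
    0 ≤ nextCutoff p d - p d := by
  unfold nextCutoff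
  split_ifs with h
  · exact sub_nonneg.2 (hp (Fin.mk_le_mk.2 (Nat.le_succ d)))
  · exact (sub_pos.2 (hp1 d)).le

noncomputable def demandFactor (γ : Fin n → ℝ) (c : Fin n) : ℝ :=
  ∑ d ∈ Ici c, (nextCutoff p d - p d) / (1 - ∑ j ∈ Ioi d, γ j)

variable {p}

lemma demandFactor_congr {γ γ' : Fin n → ℝ} {c : Fin n} (h : ∀ j, c < j → γ' j = γ j) :
    demandFactor p γ' c = demandFactor p γ c :=
  sum_congr rfl fun d hd => by
    rw [sum_congr rfl fun j hj => h j ((mem_Ici.1 hd).trans_lt (mem_Ioi.1 hj))]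

lemma demandFactor_pos (hp : Monotone p) (hp1 : ∀ i, p i < 1) {γ : Fin n → ℝ}
    (hγ : ∀ i, 0 < γ i) (hγsum : ∑ i, γ i = 1) (c : Fin n) : 0 < demandFactor p γ c := by
  have hshare : ∀ d, 0 < 1 - ∑ j ∈ Ioi d, γ j := fun d => by
    rw [← hγsum, ← sum_Iic_eq_sum_sub_sum_Ioi]
    exact sum_pos (fun i _ => hγ i) ⟨d, mem_Iic.2 le_rfl⟩
  have hc := c.isLt
  let last : Fin n := ⟨n - 1, by omega⟩
  refine sum_pos' (fun d _ => div_nonneg (sub_nonneg_nextCutoff p hp hp1 d) (hshare d).le)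
    ⟨last, mem_Ici.2 (Fin.mk_le_mk.2 (by omega)), ?_⟩
  rw [nextCutoff_eq_one p (by simp [last]; omega)]
  exact div_pos (sub_pos.2 (hp1 last)) (hshare last)

lemma demand_eq_mul_demandFactor {D γ : Fin n → ℝ} (hγsum : ∑ i, γ i = 1) {c : Fin n}
    (hsys : D c = ∑ d ∈ Ici c, (γ c / ∑ i ∈ Iic d, γ i) * (nextCutoff p d - p d)) :
    D c = γ c * demandFactor p γ c := by
  rw [hsys, demandFactor, mul_sum]
  refine sum_congr rfl fun d _ => ?_
  rw [sum_Iic_eq_sum_sub_sum_Ioi, hγsum]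
  ring

lemma demandFactor_last {γ : Fin n → ℝ} {m : Fin n} (hm : (m : ℕ) = n - 1) :
    demandFactor p γ m = 1 - p m := by
  have htop : ∀ d : Fin n, d ≤ m := fun d => Fin.le_def.2 (by omega)
  have hIci : Ici m = {m} := eq_singleton_iff_unique_mem.2
    ⟨mem_Ici.2 le_rfl, fun d hd => le_antisymm (htop d) (mem_Ici.1 hd)⟩
  have hIoi : Ioi m = ∅ := Ioi_eq_empty.2 fun d _ => htop d
  rw [demandFactor, hIci, sum_singleton, hIoi, sum_empty, sub_zero, div_one,
    nextCutoff_eq_one p (by omega)]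

lemma eq_of_demand_system (hp : Monotone p) (hp1 : ∀ i, p i < 1) {D γ γ' : Fin n → ℝ}
    (hγ : ∀ i, 0 < γ i) (hγsum : ∑ i, γ i = 1) (hγ'sum : ∑ i, γ' i = 1)
    (hsys : ∀ c, D c = ∑ d ∈ Ici c, (γ c / ∑ i ∈ Iic d, γ i) * (nextCutoff p d - p d))
    (hsys' : ∀ c, D c = ∑ d ∈ Ici c,
      (γ' c / ∑ i ∈ Iic d, γ' i) * (nextCutoff p d - p d)) :
    γ' = γ := by
  funext c
  induction c using WellFoundedGT.induction with
  | _ c ih =>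
    have hfactor : γ' c * demandFactor p γ c = γ c * demandFactor p γ c :=
      calc γ' c * demandFactor p γ c = γ' c * demandFactor p γ' c := by
            rw [demandFactor_congr ih]
        _ = D c := (demand_eq_mul_demandFactor hγ'sum (hsys' c)).symm
        _ = γ c * demandFactor p γ c := demand_eq_mul_demandFactor hγsum (hsys c)
    exact mul_right_cancel₀ (demandFactor_pos hp hp1 hγ hγsum c).ne' hfactor

end MNL

/-- Inverse optimization recursion: if positive demands `D` and sorted cutoffs
`p < 1` arise from the single-score MNL model with `Σ γ = 1`, then
`γ_n = D_n / (1 - p_n)` and, for `c < n`,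
`γ_c = D_c / Σ_{d ≥ c} (p_{d+1} - p_d)/(1 - Σ_{j > d} γ_j)`; moreover these
values are the unique positive normalized solution of the demand system. -/
theorem mnl_inverse_optimization {n : ℕ} (hn : 0 < n)
    (p D : Fin n → ℝ)
    (hp : Monotone p) (hp1 : ∀ i, p i < 1)
    (γ : Fin n → ℝ) (hγ : ∀ i, 0 < γ i) (hγsum : ∑ i, γ i = 1)
    (hsys : ∀ c, D c = ∑ d ∈ Ici c,
      (γ c / ∑ i ∈ Iic d, γ i) * (nextCutoff p d - p d)) :
    γ ⟨n - 1, by omega⟩ = D ⟨n - 1, by omega⟩ / (1 - p ⟨n - 1, by omega⟩) ∧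
    (∀ c : Fin n, (c : ℕ) < n - 1 →
      γ c = D c / ∑ d ∈ Ici c,
        (nextCutoff p d - p d) / (1 - ∑ j ∈ Ioi d, γ j)) ∧
    (∀ γ' : Fin n → ℝ, (∀ i, 0 < γ' i) → ∑ i, γ' i = 1 →
      (∀ c, D c = ∑ d ∈ Ici c,
        (γ' c / ∑ i ∈ Iic d, γ' i) * (nextCutoff p d - p d)) →
      γ' = γ) := by
  have hrecursion : ∀ c, γ c = D c / demandFactor p γ c := fun c =>
    eq_div_of_mul_eq (demandFactor_pos hp hp1 hγ hγsum c).ne'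
      (demand_eq_mul_demandFactor hγsum (hsys c)).symm
  refine ⟨?_, fun c _ => hrecursion c, fun γ' _ hγ'sum hsys' =>
    eq_of_demand_system hp hp1 hγ hγsum hγ'sum hsys hsys'⟩
  rw [hrecursion, demandFactor_last rfl]
end
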